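/- Fix n ≥ 2 and let A be the mammillary compartmental matrix in the parameters a_{01}, a_{21}, …, a_{n1}, a_{12}, …, a_{1n}. Then for 0 ≤ i ≤ n−1, the coefficient c_i of λ^i in det(λI − A) equals a_{01}E_{n−i−1}(a_{12},…,a_{1n}) + Σ_{k=2}^{n} a_{k1}E_{n−i−1}(a_{12},…,a_{1n} with a_{1k} omitted) + E_{n−i}(a_{12},…,a_{1n}); and for 0 ≤ i ≤ n−2, the coefficient d_i of λ^i in det(λI − A_{11}) equals E_{n−i−1}(a_{12},…,a_{1n}). -/

import Mathlib

/-- Index `k : Fin (m+2)` recast in `Fin (m+1)` as `k - 1`. -/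
def subOne {m : ℕ} (k : Fin (m + 2)) : Fin (m + 1) :=
  ⟨k.val - 1, by have := k.isLt; omega⟩

/-- The mammillary (star) compartmental matrix with `n = m + 2` compartments
(`aK1 k = a_{k+2,1}`, `a1K k = a_{1,k+2}`). -/
def mamMatrix {R : Type*} [CommRing R] (m : ℕ) (a01 : R) (aK1 a1K : Fin (m + 1) → R) :
    Matrix (Fin (m + 2)) (Fin (m + 2)) R :=
  Matrix.of fun i j =>
    if i = 0 then (if j = 0 then -a01 - ∑ k, aK1 k else a1K (subOne j))
    else if j = 0 then aK1 (subOne i)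
    else if i = j then -(a1K (subOne i)) else 0

/-- The `k`-th elementary symmetric polynomial of the quantities `f x`, `x ∈ s`
(with `E_0 = 1` and `E_k = 0` for `k` larger than the number of quantities). -/
def esymmOf {ι R : Type*} [DecidableEq ι] [CommRing R] (s : Finset ι) (f : ι → R) (k : ℕ) : R :=
  ∑ t ∈ s.powersetCard k, ∏ x ∈ t, f x

/-!
Expanding a determinant along its first row and then its first column gives the bordered
formula `det [[a, bᵀ], [c, D]] = a det D - bᵀ adj(D) c`. For `λI - A` the block `D` is
`diag(λ + a_{1k})`, whose adjugate is `diag(Q_k)` with `Q_k = ∏_{j ≠ k} (λ + a_{1j})`, so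
`det(λI - A) = (λ + a₀₁ + Σ a_{k1}) P - Σ a_{1k} a_{k1} Q_k` with `P = ∏ (λ + a_{1k})`.
Since `P = (λ + a_{1k}) Q_k`, this is `λP + a₀₁ P + Σ a_{k1} λ Q_k`, and Vieta's formulas
give the coefficients of `P` and `Q_k` as elementary symmetric polynomials.
-/

open Polynomial Matrix Finset

namespace Matrix

variable {R : Type*} [CommRing R]

theorem det_succ_eq_sub_sum_adjugate {n : ℕ} (A : Matrix (Fin (n + 1)) (Fin (n + 1)) R) :
    A.det = A 0 0 * (A.submatrix Fin.succ Fin.succ).det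
      - ∑ j, ∑ i, A 0 j.succ * (A.submatrix Fin.succ Fin.succ).adjugate j i * A i.succ 0 := by
  rw [det_succ_row_zero, Fin.sum_univ_succ, sub_eq_add_neg, ← sum_neg_distrib]
  congr 1
  · simp
  refine sum_congr rfl fun j _ => ?_
  cases n with
  | zero => exact j.elim0
  | succ n =>
    rw [det_succ_column_zero, mul_sum, ← sum_neg_distrib]
    refine sum_congr rfl fun i _ => ?_
    simp only [adjugate_fin_succ_eq_det_submatrix, submatrix_apply, submatrix_submatrix,
      Fin.succ_succAbove_zero, Function.comp_def, Fin.succ_succAbove_succ, Fin.val_succ, pow_succ]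
    ring

theorem det_succ_of_submatrix_succ_eq_diagonal {n : ℕ} (A : Matrix (Fin (n + 1)) (Fin (n + 1)) R)
    {d : Fin n → R} (hd : A.submatrix Fin.succ Fin.succ = diagonal d) :
    A.det = A 0 0 * ∏ i, d i - ∑ j, A 0 j.succ * A j.succ 0 * ∏ i ∈ univ.erase j, d i := by
  simp only [det_succ_eq_sub_sum_adjugate, hd, det_diagonal, adjugate_diagonal, diagonal_apply,
    mul_ite, ite_mul, mul_zero, zero_mul, sum_ite_eq, mem_univ, if_true]
  congr 1
  exact sum_congr rfl fun j _ => by ring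

theorem charmatrix_submatrix {m n : Type*} [DecidableEq m] [Fintype m] [DecidableEq n]
    [Fintype n] (M : Matrix n n R) {e : m → n} (he : Function.Injective e) :
    charmatrix (M.submatrix e e) = (charmatrix M).submatrix e e := by
  ext i j : 1
  simp [charmatrix_apply, diagonal_apply, he.eq_iff]

end Matrix

section Esymm

variable {ι R : Type*} [DecidableEq ι] [CommRing R] (s : Finset ι) (f : ι → R)

theorem esymmOf_eq_zero_of_card_lt {k : ℕ} (h : #s < k) : esymmOf s f k = 0 := by
  rw [esymmOf, powersetCard_eq_empty.mpr h, sum_empty]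

theorem coeff_prod_X_add_C_eq_esymmOf {i : ℕ} (h : i ≤ #s) :
    (∏ x ∈ s, (X + C (f x))).coeff i = esymmOf s f (#s - i) :=
  prod_X_add_C_coeff s f h

theorem coeff_X_mul_prod_X_add_C_eq_esymmOf {i : ℕ} (h : i ≤ #s + 1) :
    (X * ∏ x ∈ s, (X + C (f x))).coeff i = esymmOf s f (#s + 1 - i) := by
  cases i with
  | zero => rw [coeff_X_mul_zero, esymmOf_eq_zero_of_card_lt s f (by omega)]
  | succ i =>
    rw [coeff_X_mul, coeff_prod_X_add_C_eq_esymmOf s f (by omega), Nat.add_sub_add_right]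

end Esymm

section Mammillary

variable {R : Type*} [CommRing R] (m : ℕ) (a01 : R) (aK1 a1K : Fin (m + 1) → R)

theorem mamMatrix_submatrix_succ :
    (mamMatrix m a01 aK1 a1K).submatrix Fin.succ Fin.succ = diagonal fun k => -a1K k := by
  ext i j : 1
  rcases eq_or_ne i j with rfl | hij
  · simp [mamMatrix, subOne]
  · simp [mamMatrix, hij]

theorem charmatrix_mamMatrix_submatrix_succ :
    (charmatrix (mamMatrix m a01 aK1 a1K)).submatrix Fin.succ Fin.succ
      = diagonal fun k => X + C (a1K k) := by
  simp [← charmatrix_submatrix _ (Fin.succ_injective _), mamMatrix_submatrix_succ,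
    charmatrix_diagonal]

theorem charpoly_mamMatrix_submatrix_succ :
    ((mamMatrix m a01 aK1 a1K).submatrix Fin.succ Fin.succ).charpoly = ∏ k, (X + C (a1K k)) := by
  simp [mamMatrix_submatrix_succ, charpoly_diagonal]

theorem charpoly_mamMatrix :
    (mamMatrix m a01 aK1 a1K).charpoly
      = X * ∏ k, (X + C (a1K k)) + C a01 * ∏ k, (X + C (a1K k))
        + ∑ k, C (aK1 k) * (X * ∏ j ∈ univ.erase k, (X + C (a1K j))) := by
  have h00 : charmatrix (mamMatrix m a01 aK1 a1K) 0 0 = X + C a01 + ∑ k, C (aK1 k) := by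
    simp [mamMatrix]
    ring
  have hborder (k : Fin (m + 1)) : charmatrix (mamMatrix m a01 aK1 a1K) 0 k.succ
      * charmatrix (mamMatrix m a01 aK1 a1K) k.succ 0 = C (aK1 k) * C (a1K k) := by
    rw [charmatrix_apply_ne _ _ _ (Fin.succ_ne_zero k).symm,
      charmatrix_apply_ne _ _ _ (Fin.succ_ne_zero k)]
    simp [mamMatrix, subOne, mul_comm]
  have hsplit (k : Fin (m + 1)) : C (a1K k) * ∏ j ∈ univ.erase k, (X + C (a1K j))
      = ∏ j, (X + C (a1K j)) - X * ∏ j ∈ univ.erase k, (X + C (a1K j)) := by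
    rw [eq_sub_iff_add_eq', ← add_mul, mul_prod_erase univ (fun j => X + C (a1K j)) (mem_univ k)]
  rw [charpoly, det_succ_of_submatrix_succ_eq_diagonal _ (charmatrix_mamMatrix_submatrix_succ ..),
    h00]
  simp only [hborder, mul_assoc, hsplit, mul_sub, sum_sub_distrib, ← sum_mul]
  ring

end Mammillary

/-- For the `n`-compartment mammillary model (`n = m + 2 ≥ 2`):
for `0 ≤ i ≤ n - 1`, the coefficient `c_i` of `λ^i` in `det (λI - A)` equals
`a₀₁ E_{n-i-1}(a₁₂,…,a_{1n}) + Σ_{k=2}^n a_{k1} E_{n-i-1}(a₁₂,…,a_{1n} omitting a_{1k})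
+ E_{n-i}(a₁₂,…,a_{1n})`, and for `0 ≤ i ≤ n - 2`, the coefficient `d_i` of `λ^i` in
`det (λI - A₁₁)` equals `E_{n-i-1}(a₁₂,…,a_{1n})`. -/
theorem mam_coeffs {R : Type*} [CommRing R] (m : ℕ) (a01 : R) (aK1 a1K : Fin (m + 1) → R) :
    (∀ i : ℕ, i ≤ m + 1 →
      (mamMatrix m a01 aK1 a1K).charpoly.coeff i
        = a01 * esymmOf Finset.univ a1K (m + 1 - i)
          + ∑ k : Fin (m + 1), aK1 k * esymmOf (Finset.univ.erase k) a1K (m + 1 - i)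
          + esymmOf Finset.univ a1K (m + 2 - i)) ∧
    (∀ i : ℕ, i ≤ m →
      ((mamMatrix m a01 aK1 a1K).submatrix Fin.succ Fin.succ).charpoly.coeff i
        = esymmOf Finset.univ a1K (m + 1 - i)) := by
  have hcard : #(univ : Finset (Fin (m + 1))) = m + 1 := card_fin _
  have hcard_erase (k : Fin (m + 1)) : #(univ.erase k) = m := by
    rw [card_erase_of_mem (mem_univ k), hcard, Nat.add_sub_cancel]
  refine ⟨fun i hi => ?_, fun i hi => ?_⟩
  · have hterm (k : Fin (m + 1)) :
        (C (aK1 k) * (X * ∏ j ∈ univ.erase k, (X + C (a1K j)))).coeff i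
          = aK1 k * esymmOf (univ.erase k) a1K (m + 1 - i) := by
      rw [coeff_C_mul, coeff_X_mul_prod_X_add_C_eq_esymmOf _ _ (by rw [hcard_erase]; omega),
        hcard_erase]
    rw [charpoly_mamMatrix, coeff_add, coeff_add, coeff_C_mul, finsetSum_coeff,
      coeff_X_mul_prod_X_add_C_eq_esymmOf _ _ (by omega),
      coeff_prod_X_add_C_eq_esymmOf _ _ (by omega), hcard]
    simp only [hterm]
    ring
  · rw [charpoly_mamMatrix_submatrix_succ, coeff_prod_X_add_C_eq_esymmOf _ _ (by omega), hcard]
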